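/- Let n ≥ 1 be an integer, P ≥ 1, C > 0, ε > 0 real numbers, and L = εC/(n(P+1)). For each user k ∈ {1, …, n}, let D_k ⊆ ℂ be a finite demand set with 0 ∈ D_k such that every d ∈ D_k satisfies Im(d) ≥ 0 and −Re(d) ≤ P·Im(d) whenever Re(d) < 0, and let v_k : ℂ → ℝ≥0 be the monotone valuation v_k(d) = max{ w_k(d̄) : d̄ ∈ D_k, d̄ ⪯ d } induced by values w_k : D_k → ℝ≥0 with w_k(0) = 0. Let OPT = max{ ∑_k v_k(d_k) : d_k ∈ D_k for all k, |∑_k d_k| ≤ C }. Then max{ ∑_k v_k(ĥd_k) : d_k ∈ D_k for all k, |∑_k ĥd_k| ≤ (1+2ε)·C } ≥ OPT, where ĥd_k denotes the rounded demand of d_k. -/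

import Mathlib

/-!
The allocation itself already works once its demands are rounded. Rounding pushes every demand
away from both axes inside its own closed quadrant (here `Im d ≥ 0` matters, as the imaginary
part is always rounded up), so `d ⪯ ĥd` and the monotone valuations can only grow. Each
rounding moves a demand by at most `2L`, so the total demand moves by at most
`2nL = 2εC/(P+1) ≤ 2εC`.
-/

/-- The rounded demand: real part rounded up (resp. down) to a multiple of `L`
when it is nonnegative (resp. negative), imaginary part always rounded up. -/
noncomputable def roundDemand (L : ℝ) (d : ℂ) : ℂ :=
  if 0 ≤ d.re then
    ⟨(⌈d.re / L⌉ : ℤ) * L, (⌈d.im / L⌉ : ℤ) * L⟩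
  else
    ⟨(⌊d.re / L⌋ : ℤ) * L, (⌈d.im / L⌉ : ℤ) * L⟩

/-- The componentwise dominance partial order `⪯` on complex demands:
`f ⪯ g` iff `f = 0`, or the components of `g` dominate those of `f` in
absolute value and agree in sign. -/
def cle (f g : ℂ) : Prop :=
  f = 0 ∨ (|f.re| ≤ |g.re| ∧ |f.im| ≤ |g.im| ∧
    Real.sign f.re = Real.sign g.re ∧ Real.sign f.im = Real.sign g.im)

section Rounding

variable {L : ℝ} (hL : 0 < L) (x : ℝ)
include hL

lemma le_ceil_div_mul : x ≤ ⌈x / L⌉ * L :=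
  (div_le_iff₀ hL).1 (Int.le_ceil _)

lemma ceil_div_mul_sub_lt : ⌈x / L⌉ * L - x < L := by
  have h := mul_lt_mul_of_pos_right (Int.ceil_lt_add_one (x / L)) hL
  rw [add_mul, div_mul_cancel₀ x hL.ne', one_mul] at h
  linarith

lemma abs_ceil_div_mul_sub_le : |⌈x / L⌉ * L - x| ≤ L :=
  abs_le.2 ⟨by linarith [le_ceil_div_mul hL x], (ceil_div_mul_sub_lt hL x).le⟩

lemma abs_floor_div_mul_sub_le : |⌊x / L⌋ * L - x| ≤ L :=
  abs_le.2 ⟨by linarith [Int.sub_floor_div_mul_lt x hL], by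
    linarith [Int.sub_floor_div_mul_nonneg x hL]⟩

variable {x}

lemma abs_le_abs_ceil_div_mul (hx : 0 ≤ x) : |x| ≤ |⌈x / L⌉ * L| := by
  have h := le_ceil_div_mul hL x
  rwa [abs_of_nonneg hx, abs_of_nonneg (hx.trans h)]

lemma sign_ceil_div_mul (hx : 0 ≤ x) : Real.sign (⌈x / L⌉ * L) = Real.sign x := by
  rcases hx.eq_or_lt with rfl | hx
  · simp
  · rw [Real.sign_of_pos hx, Real.sign_of_pos (hx.trans_le (le_ceil_div_mul hL x))]

lemma abs_le_abs_floor_div_mul (hx : x < 0) : |x| ≤ |⌊x / L⌋ * L| := by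
  have h := Int.sub_floor_div_mul_nonneg x hL
  rw [abs_of_neg hx, abs_of_neg (by linarith)]
  linarith

lemma sign_floor_div_mul (hx : x < 0) : Real.sign (⌊x / L⌋ * L) = Real.sign x := by
  have h := Int.sub_floor_div_mul_nonneg x hL
  rw [Real.sign_of_neg hx, Real.sign_of_neg (by linarith)]

end Rounding

lemma roundDemand_im (L : ℝ) (d : ℂ) : (roundDemand L d).im = ⌈d.im / L⌉ * L := by
  unfold roundDemand; split_ifs <;> rfl

lemma roundDemand_re_of_nonneg (L : ℝ) {d : ℂ} (hd : 0 ≤ d.re) :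
    (roundDemand L d).re = ⌈d.re / L⌉ * L := by
  simp [roundDemand, hd]

lemma roundDemand_re_of_neg (L : ℝ) {d : ℂ} (hd : d.re < 0) :
    (roundDemand L d).re = ⌊d.re / L⌋ * L := by
  simp [roundDemand, hd.not_ge]

lemma dist_roundDemand_le {L : ℝ} (hL : 0 < L) (d : ℂ) : dist (roundDemand L d) d ≤ 2 * L := by
  have hre : |(roundDemand L d).re - d.re| ≤ L := by
    rcases le_or_gt 0 d.re with hd | hd
    · rw [roundDemand_re_of_nonneg L hd]; exact abs_ceil_div_mul_sub_le hL _
    · rw [roundDemand_re_of_neg L hd]; exact abs_floor_div_mul_sub_le hL _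
  have him : |(roundDemand L d).im - d.im| ≤ L := by
    rw [roundDemand_im]; exact abs_ceil_div_mul_sub_le hL _
  rw [dist_eq_norm]
  calc ‖roundDemand L d - d‖
      ≤ |(roundDemand L d - d).re| + |(roundDemand L d - d).im| :=
        Complex.norm_le_abs_re_add_abs_im _
    _ ≤ 2 * L := by rw [Complex.sub_re, Complex.sub_im]; linarith

lemma norm_sum_roundDemand_le {ι : Type*} {L : ℝ} (hL : 0 < L) (s : Finset ι) (d : ι → ℂ) :
    ‖∑ k ∈ s, roundDemand L (d k)‖ ≤ ‖∑ k ∈ s, d k‖ + s.card * (2 * L) := by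
  have h := dist_sum_sum_le_of_le s (fun k _ => dist_roundDemand_le hL (d k))
  rw [Finset.sum_const, nsmul_eq_mul, dist_eq_norm] at h
  linarith [norm_le_norm_add_norm_sub' (∑ k ∈ s, roundDemand L (d k)) (∑ k ∈ s, d k)]

lemma eq_zero_of_cle_zero {f : ℂ} (h : cle f 0) : f = 0 := by
  rcases h with h | ⟨hre, him, -, -⟩
  · exact h
  · simp only [Complex.zero_re, Complex.zero_im, abs_zero, abs_nonpos_iff] at hre him
    exact Complex.ext hre him

lemma cle_trans {f g h : ℂ} (hfg : cle f g) (hgh : cle g h) : cle f h := by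
  rcases hgh with rfl | hgh
  · exact Or.inl (eq_zero_of_cle_zero hfg)
  rcases hfg with hf | hfg
  · exact Or.inl hf
  exact Or.inr ⟨hfg.1.trans hgh.1, hfg.2.1.trans hgh.2.1,
    hfg.2.2.1.trans hgh.2.2.1, hfg.2.2.2.trans hgh.2.2.2⟩

lemma cle_roundDemand {L : ℝ} (hL : 0 < L) {d : ℂ} (hd : 0 ≤ d.im) : cle d (roundDemand L d) := by
  refine Or.inr ⟨?_, ?_, ?_, ?_⟩
  · rcases le_or_gt 0 d.re with hre | hre
    · rw [roundDemand_re_of_nonneg L hre]; exact abs_le_abs_ceil_div_mul hL hre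
    · rw [roundDemand_re_of_neg L hre]; exact abs_le_abs_floor_div_mul hL hre
  · rw [roundDemand_im]; exact abs_le_abs_ceil_div_mul hL hd
  · rcases le_or_gt 0 d.re with hre | hre
    · rw [roundDemand_re_of_nonneg L hre, sign_ceil_div_mul hL hre]
    · rw [roundDemand_re_of_neg L hre, sign_floor_div_mul hL hre]
  · rw [roundDemand_im, sign_ceil_div_mul hL hd]

lemma le_of_cle_of_isGreatest {D : Set ℂ} {w v : ℂ → ℝ}
    (hv : ∀ d, IsGreatest (w '' {x | x ∈ D ∧ cle x d}) (v d)) {d d' : ℂ} (h : cle d d') :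
    v d ≤ v d' :=
  (hv d).isLUB.mono (hv d').isLUB <|
    Set.image_mono fun _ hx => ⟨hx.1, cle_trans hx.2 h⟩

theorem stmt_10_general (n : ℕ) (hn : 1 ≤ n) (P C ε L : ℝ)
    (hP : 1 ≤ P) (hC : 0 < C) (hε : 0 < ε)
    (hL : L = ε * C / (n * (P + 1)))
    (D : Fin n → Finset ℂ)
    (hDIm : ∀ k, ∀ d ∈ D k, 0 ≤ d.im)
    (w : Fin n → ℂ → ℝ)
    (v : Fin n → ℂ → ℝ)
    (hv : ∀ k (d : ℂ), IsGreatest (w k '' {x : ℂ | x ∈ D k ∧ cle x d}) (v k d)) :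
    ∀ d : Fin n → ℂ, (∀ k, d k ∈ D k) → ‖∑ k, d k‖ ≤ C →
      ∃ e : Fin n → ℂ, (∀ k, e k ∈ D k) ∧
        ‖∑ k, roundDemand L (e k)‖ ≤ (1 + 2 * ε) * C ∧
        ∑ k, v k (d k) ≤ ∑ k, v k (roundDemand L (e k)) := by
  intro d hd hcap
  have hL_pos : 0 < L := by rw [hL]; positivity
  refine ⟨d, hd, ?_, Finset.sum_le_sum fun k _ =>
    le_of_cle_of_isGreatest (hv k) (cle_roundDemand hL_pos (hDIm k (d k) (hd k)))⟩
  have hround : (n : ℝ) * (2 * L) ≤ 2 * ε * C := by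
    have : (n : ℝ) * (2 * L) = 2 * ε * C / (P + 1) := by rw [hL]; field_simp
    rw [this]
    exact div_le_self (by positivity) (by linarith)
  have h := norm_sum_roundDemand_le hL_pos Finset.univ d
  rw [Finset.card_univ, Fintype.card_fin] at h
  linarith

/-- in the multi-minded problem, the optimum of the rounded
relaxed problem (capacity `(1+2ε)C`, each chosen demand rounded) is at least
the optimum `OPT` of the original problem: for every feasible allocation `d`
there is an allocation `e` whose rounded demands are feasible for capacity
`(1+2ε)C` and whose total (monotone) valuation is at least that of `d`. -/
theorem stmt_10 (n : ℕ) (hn : 1 ≤ n) (P C ε L : ℝ)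
    (hP : 1 ≤ P) (hC : 0 < C) (hε : 0 < ε)
    (hL : L = ε * C / (n * (P + 1)))
    (D : Fin n → Finset ℂ) (hD0 : ∀ k, (0 : ℂ) ∈ D k)
    (hDIm : ∀ k, ∀ d ∈ D k, 0 ≤ d.im)
    (hDArg : ∀ k, ∀ d ∈ D k, d.re < 0 → -d.re ≤ P * d.im)
    (w : Fin n → ℂ → ℝ) (hw0 : ∀ k, w k 0 = 0)
    (hwpos : ∀ k, ∀ d ∈ D k, 0 ≤ w k d)
    (v : Fin n → ℂ → ℝ)
    (hv : ∀ k (d : ℂ), IsGreatest (w k '' {x : ℂ | x ∈ D k ∧ cle x d}) (v k d)) :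
    ∀ d : Fin n → ℂ, (∀ k, d k ∈ D k) → ‖∑ k, d k‖ ≤ C →
      ∃ e : Fin n → ℂ, (∀ k, e k ∈ D k) ∧
        ‖∑ k, roundDemand L (e k)‖ ≤ (1 + 2 * ε) * C ∧
        ∑ k, v k (d k) ≤ ∑ k, v k (roundDemand L (e k)) :=
  stmt_10_general n hn P C ε L hP hC hε hL D hDIm w v hv
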